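/- (Correctness of the ghost-component algorithm for multiplication.) Let w, w′ ∈ W(k[X₁,…,Xₘ]) and let G₀,…,G_{n−1}, H₀,…,H_{n−1} ∈ W(k)[X₁,…,Xₘ] satisfy π(G_i) = w_i and π(H_i) = w′_i for every i ∈ {0,…,n−1}. Suppose R₀,…,R_{n−1} ∈ W(k)[X₁,…,Xₘ] satisfy, for every j ∈ {0,…,n−1}, the ghost-component equation Σ_{i=0}^{j} p^i R_i^{p^{j−i}} = (Σ_{i=0}^{j} p^i G_i^{p^{j−i}}) · (Σ_{i=0}^{j} p^i H_i^{p^{j−i}}). Then π(R_i) = (w · w′)_i for every i ∈ {0,…,n−1}. -/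

import Mathlib

/-!
The Witt vectors `g = (G₀, G₁, …)`, `h = (H₀, H₁, …)` and `r = (R₀, R₁, …)` over
`A = W(k)[X₁,…,Xₘ]` satisfy `ghost_j r = ghost_j (g * h)` for `j < n`. Since `k` is reduced of
characteristic `p`, multiplication by `p`, which equals `V ∘ F`, is injective on `W(k)`, hence on `A`, and over a
`p`-torsion-free ring the first `n` ghost components determine the first `n` Witt coordinates.
So `Rᵢ = (g * h)ᵢ` for `i < n`. Applying `W(π)` and using that the first `n` coordinates of a
product only depend on the first `n` coordinates of the factors gives `π(Rᵢ) = (w * w')ᵢ`.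
-/

noncomputable section

/-- The ring homomorphism `π : W(k)[X₁,…,Xₘ] → k[X₁,…,Xₘ]` reducing each coefficient
to its 0-th Witt coordinate. -/
def wittPi (p : ℕ) [Fact p.Prime] (m : ℕ) (k : Type*) [CommRing k] :
    MvPolynomial (Fin m) (WittVector p k) →+* MvPolynomial (Fin m) k :=
  MvPolynomial.map (WittVector.constantCoeff)

/-- The ring homomorphism `ε : W(k)[X₁,…,Xₘ] → W(k[X₁,…,Xₘ])` which on `W(k)` is
induced by functoriality of `W` from the inclusion `k → k[X₁,…,Xₘ]` and sends each
`Xᵢ` to the Teichmüller lift `[Xᵢ]`. -/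
def wittEps (p : ℕ) [Fact p.Prime] (m : ℕ) (k : Type*) [CommRing k] :
    MvPolynomial (Fin m) (WittVector p k) →+* WittVector p (MvPolynomial (Fin m) k) :=
  MvPolynomial.eval₂Hom (WittVector.map (MvPolynomial.C))
    (fun i => WittVector.teichmuller p (MvPolynomial.X i))

open MvPolynomial

theorem MvPolynomial.isLeftRegular_C {σ R : Type*} [CommSemiring R] {r : R}
    (hr : IsLeftRegular r) : IsLeftRegular (C r : MvPolynomial σ R) := by
  intro f g hfg
  ext d
  apply hr
  simpa only [coeff_C_mul] using congr(coeff d $hfg)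

namespace WittVector

variable {p : ℕ} [Fact p.Prime]

theorem frobenius_injective (k : Type*) [CommRing k] [CharP k p] [IsReduced k] :
    Function.Injective (frobenius : WittVector p k → WittVector p k) := by
  rw [frobenius_eq_map_frobenius]
  exact map_injective _ (frobenius_inj k p)

theorem isLeftRegular_p (k : Type*) [CommRing k] [CharP k p] [IsReduced k] :
    IsLeftRegular (p : WittVector p k) := by
  intro x y hxy
  apply frobenius_injective k
  apply verschiebung_injective
  simpa only [verschiebung_frobenius, mul_comm _ (p : WittVector p k)] using hxy

variable {R : Type*} [CommRing R]

theorem truncate_eq_truncate_iff {n : ℕ} {x y : WittVector p R} :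
    truncate n x = truncate n y ↔ ∀ i < n, x.coeff i = y.coeff i := by
  refine ⟨fun h i hi => ?_, fun h => TruncatedWittVector.ext fun i => ?_⟩
  · rw [← coeff_truncate x ⟨i, hi⟩, ← coeff_truncate y ⟨i, hi⟩, h]
  · simp only [coeff_truncate, h i i.is_lt]

theorem coeff_mul_eq_of_coeff_eq {n : ℕ} {x x' y y' : WittVector p R}
    (hx : ∀ i < n, x.coeff i = x'.coeff i) (hy : ∀ i < n, y.coeff i = y'.coeff i) :
    ∀ i < n, (x * y).coeff i = (x' * y').coeff i := by
  rw [← truncate_eq_truncate_iff] at hx hy ⊢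
  rw [map_mul, map_mul, hx, hy]

theorem coeff_eq_of_ghostComponent_eq (hp : IsLeftRegular (p : R)) {n : ℕ}
    {x y : WittVector p R} (h : ∀ j < n, ghostComponent j x = ghostComponent j y) :
    ∀ i < n, x.coeff i = y.coeff i := by
  intro i hi
  induction i using Nat.strong_induction_on with
  | _ i ih =>
    have hghost := h i hi
    simp only [ghostComponent_apply, aeval_wittPolynomial, Finset.sum_range_succ,
      Nat.sub_self, pow_zero, pow_one] at hghost
    have hlower : ∑ j ∈ Finset.range i, (p : R) ^ j * x.coeff j ^ p ^ (i - j)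
        = ∑ j ∈ Finset.range i, (p : R) ^ j * y.coeff j ^ p ^ (i - j) :=
      Finset.sum_congr rfl fun j hj => by
        rw [ih j (Finset.mem_range.mp hj) ((Finset.mem_range.mp hj).trans hi)]
    rw [hlower] at hghost
    exact hp.pow i (add_left_cancel hghost)

end WittVector

theorem stmt14_general (p m n : ℕ) [Fact p.Prime]
    (k : Type*) [CommRing k] [IsReduced k] [CharP k p]
    (w w' : WittVector p (MvPolynomial (Fin m) k))
    (G H R : ℕ → MvPolynomial (Fin m) (WittVector p k))
    (hG : ∀ i < n, wittPi p m k (G i) = w.coeff i)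
    (hH : ∀ i < n, wittPi p m k (H i) = w'.coeff i)
    (hR : ∀ j < n,
      ∑ i ∈ Finset.range (j + 1),
          (p : MvPolynomial (Fin m) (WittVector p k)) ^ i * (R i) ^ p ^ (j - i)
        = (∑ i ∈ Finset.range (j + 1),
              (p : MvPolynomial (Fin m) (WittVector p k)) ^ i * (G i) ^ p ^ (j - i))
            * ∑ i ∈ Finset.range (j + 1),
                (p : MvPolynomial (Fin m) (WittVector p k)) ^ i * (H i) ^ p ^ (j - i)) :
    ∀ i < n, wittPi p m k (R i) = (w * w').coeff i := by
  let g := WittVector.mk p G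
  let h := WittVector.mk p H
  have hp : IsLeftRegular (p : MvPolynomial (Fin m) (WittVector p k)) := by
    rw [← map_natCast C]
    exact isLeftRegular_C (WittVector.isLeftRegular_p k)
  have hRgh : ∀ i < n, R i = (g * h).coeff i :=
    WittVector.coeff_eq_of_ghostComponent_eq (x := WittVector.mk p R) hp fun j hj => by
      simpa only [map_mul, WittVector.ghostComponent_apply, aeval_wittPolynomial,
        WittVector.coeff_mk, g, h] using hR j hj
  intro i hi
  calc wittPi p m k (R i) = (WittVector.map (wittPi p m k) (g * h)).coeff i := by
        rw [WittVector.map_coeff, hRgh i hi]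
    _ = (w * w').coeff i := by
        rw [map_mul]
        exact WittVector.coeff_mul_eq_of_coeff_eq
          (fun j hj => (WittVector.map_coeff _ _ _).trans (hG j hj))
          (fun j hj => (WittVector.map_coeff _ _ _).trans (hH j hj)) i hi

theorem stmt14 (p m n : ℕ) [Fact p.Prime] (hm : 1 ≤ m) (hn : 1 ≤ n)
    (k : Type*) [CommRing k] [IsReduced k] [CharP k p]
    (w w' : WittVector p (MvPolynomial (Fin m) k))
    (G H R : ℕ → MvPolynomial (Fin m) (WittVector p k))
    (hG : ∀ i < n, wittPi p m k (G i) = w.coeff i)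
    (hH : ∀ i < n, wittPi p m k (H i) = w'.coeff i)
    (hR : ∀ j < n,
      ∑ i ∈ Finset.range (j + 1),
          (p : MvPolynomial (Fin m) (WittVector p k)) ^ i * (R i) ^ p ^ (j - i)
        = (∑ i ∈ Finset.range (j + 1),
              (p : MvPolynomial (Fin m) (WittVector p k)) ^ i * (G i) ^ p ^ (j - i))
            * ∑ i ∈ Finset.range (j + 1),
                (p : MvPolynomial (Fin m) (WittVector p k)) ^ i * (H i) ^ p ^ (j - i)) :
    ∀ i < n, wittPi p m k (R i) = (w * w').coeff i :=
  stmt14_general p m n k w w' G H R hG hH hR
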